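/- arXiv:0903.4386 — 4 statements merged into one kernel-verified Lean document; each statement's English description precedes it below -/
import Mathlib

section
/- Let P_era(M, n, L) denote the minimum erasure probability of length-n error-free block codes (codes with zero error probability) with feedback, M equiprobable messages, and list size L. Then for any n, M, L, any n₁ ≤ n and L₁: P_era(M, n, L) ≥ P_e(M, n₁, L₁, 0) · P_era(L₁+1, n−n₁, L), where P_e(M, n₁, L₁, 0) is the minimum error probability of erasure-free length-n₁ codes with M messages and list size L₁. -/
open scoped BigOperators

/-- A fixed-length block code over input alphabet `X`, output alphabet `Y`, with
noiseless delay-free feedback, `M` messages, block length `n`, randomized decoding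
with lists of size at most `L` and an erasure option (`none`). -/
structure FBCode (X Y : Type) [Fintype X] [Fintype Y] (M n L : ℕ) where
  enc : Fin M → (t : Fin n) → (Fin t.1 → Y) → X
  dec : (Fin n → Y) → Option (Finset (Fin M)) → ℝ
  dec_nonneg : ∀ y o, 0 ≤ dec y o
  dec_sum : ∀ y, ∑ o : Option (Finset (Fin M)), dec y o = 1
  dec_size : ∀ y S, dec y (some S) ≠ 0 → S.card ≤ L

namespace FBCode

variable {X Y : Type} [Fintype X] [Fintype Y]

/-- Probability of observing output sequence `y` when message `m` is sent over the DMC `W`. -/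
noncomputable def outProb (W : X → Y → ℝ) {M n L : ℕ} (c : FBCode X Y M n L)
    (m : Fin M) (y : Fin n → Y) : ℝ :=
  ∏ t : Fin n, W (c.enc m t (fun i => y ⟨i.1, lt_trans i.2 t.2⟩)) (y t)

/-- Erasure probability of the code, uniform prior on messages. -/
noncomputable def Pera (W : X → Y → ℝ) {M n L : ℕ} (c : FBCode X Y M n L) : ℝ :=
  (M : ℝ)⁻¹ * ∑ m : Fin M, ∑ y : Fin n → Y, outProb W c m y * c.dec y none

/-- (Undetected) error probability of the code, uniform prior on messages. -/
noncomputable def Perr (W : X → Y → ℝ) {M n L : ℕ} (c : FBCode X Y M n L) : ℝ :=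
  (M : ℝ)⁻¹ * ∑ m : Fin M, ∑ y : Fin n → Y,
    outProb W c m y * ∑ S : Finset (Fin M), if m ∈ S then 0 else c.dec y (some S)

end FBCode

/-- Minimum error probability of length-`n` feedback codes with `M` equiprobable
messages, list size `L`, erasure probability at most `p`. -/
noncomputable def PeMin {X Y : Type} [Fintype X] [Fintype Y] (W : X → Y → ℝ)
    (M n L : ℕ) (p : ℝ) : ℝ :=
  sInf {e | ∃ c : FBCode X Y M n L, FBCode.Pera W c ≤ p ∧ FBCode.Perr W c = e}

/-- Minimum erasure probability of length-`n` error-free feedback codes with `M`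
equiprobable messages and list size `L`. -/
noncomputable def PeraMin {X Y : Type} [Fintype X] [Fintype Y] (W : X → Y → ℝ)
    (M n L : ℕ) : ℝ :=
  sInf {r | ∃ c : FBCode X Y M n L, FBCode.Perr W c = 0 ∧ FBCode.Pera W c = r}

/-!
Cut the block after `n₁` symbols. Given the prefix `y₁`, the last `n - n₁` symbols form an
error-free code for the messages that can still produce `y₁`, with their conditional erasure
probabilities. Any `L₁ + 1` of these messages form an error-free `(L₁ + 1)`-message code whose
erasure probability is the average of theirs, so at most `L₁` of them have conditional erasure
probability below `r = P_era(L₁ + 1, n - n₁, L)`. Listing those after `y₁` is an erasure-free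
code of length `n₁` and list size `L₁`, so it errs with probability at least `P_e(M, n₁, L₁, 0)`,
and whenever it errs the original code erases with conditional probability at least `r`.
-/

namespace FBCode

variable {X Y : Type} [Fintype X] [Fintype Y] {W : X → Y → ℝ} {M K n n₁ n₂ L L₁ : ℕ}

noncomputable def eraProb (W : X → Y → ℝ) (c : FBCode X Y M n L) (m : Fin M) : ℝ :=
  ∑ y : Fin n → Y, outProb W c m y * c.dec y none

def NoErrorAt (W : X → Y → ℝ) (c : FBCode X Y M n L) (m : Fin M) : Prop :=
  ∀ y S, m ∉ S → outProb W c m y * c.dec y (some S) = 0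

theorem Pera_eq_sum_eraProb (c : FBCode X Y M n L) :
    Pera W c = (M : ℝ)⁻¹ * ∑ m, eraProb W c m := rfl

section Nonneg

variable (hW0 : ∀ x y, 0 ≤ W x y)
include hW0

theorem outProb_nonneg (c : FBCode X Y M n L) (m : Fin M) (y : Fin n → Y) :
    0 ≤ outProb W c m y :=
  Finset.prod_nonneg fun _ _ => hW0 _ _

theorem eraProb_nonneg (c : FBCode X Y M n L) (m : Fin M) : 0 ≤ eraProb W c m :=
  Finset.sum_nonneg fun y _ => mul_nonneg (outProb_nonneg hW0 c m y) (c.dec_nonneg _ _)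

theorem Pera_nonneg (c : FBCode X Y M n L) : 0 ≤ Pera W c :=
  mul_nonneg (by positivity) (Finset.sum_nonneg fun m _ => eraProb_nonneg hW0 c m)

theorem Perr_eq_zero_iff (c : FBCode X Y M n L) : Perr W c = 0 ↔ ∀ m, NoErrorAt W c m := by
  rcases Nat.eq_zero_or_pos M with rfl | hM
  · simp [Perr]
  have hterm : ∀ m y S, 0 ≤ if m ∈ S then 0 else outProb W c m y * c.dec y (some S) :=
    fun m y S => by
      split_ifs
      exacts [le_rfl, mul_nonneg (outProb_nonneg hW0 c m y) (c.dec_nonneg _ _)]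
  have hM' : (M : ℝ)⁻¹ ≠ 0 := inv_ne_zero (Nat.cast_ne_zero.2 hM.ne')
  rw [Perr, mul_eq_zero, or_iff_right hM']
  simp only [Finset.mul_sum, mul_ite, mul_zero]
  simp (disch := intros; repeat first | exact hterm .. | refine Finset.sum_nonneg fun _ _ => ?_)
    only [Finset.sum_eq_zero_iff_of_nonneg, Finset.mem_univ, true_implies, NoErrorAt]
  simp

theorem Perr_nonneg (c : FBCode X Y M n L) : 0 ≤ Perr W c :=
  mul_nonneg (by positivity) <| Finset.sum_nonneg fun m _ => Finset.sum_nonneg fun y _ =>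
    mul_nonneg (outProb_nonneg hW0 c m y) <| Finset.sum_nonneg fun S _ => by
      split_ifs
      exacts [le_rfl, c.dec_nonneg _ _]

end Nonneg

def erasing (enc : Fin M → (t : Fin n) → (Fin t.1 → Y) → X) : FBCode X Y M n L where
  enc := enc
  dec _ o := if o = none then 1 else 0
  dec_nonneg _ o := by split_ifs <;> norm_num
  dec_sum _ := by simp
  dec_size _ S h := by simp at h

def ofList (enc : Fin M → (t : Fin n) → (Fin t.1 → Y) → X)
    (D : (Fin n → Y) → Finset (Fin M)) (hD : ∀ y, (D y).card ≤ L) : FBCode X Y M n L where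
  enc := enc
  dec y o := if o = some (D y) then 1 else 0
  dec_nonneg y o := by split_ifs <;> norm_num
  dec_sum y := by simp
  dec_size y S h := by
    obtain rfl : S = D y := by simpa using h
    exact hD y

theorem Perr_erasing (enc : Fin M → (t : Fin n) → (Fin t.1 → Y) → X) :
    Perr W (erasing (L := L) enc) = 0 := by
  simp [Perr, erasing]

section ofList

variable (enc : Fin M → (t : Fin n) → (Fin t.1 → Y) → X) (D : (Fin n → Y) → Finset (Fin M))
  (hD : ∀ y, (D y).card ≤ L)

theorem Pera_ofList : Pera W (ofList enc D hD) = 0 := by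
  simp [Pera, ofList]

theorem Perr_ofList : Perr W (ofList enc D hD) =
    (M : ℝ)⁻¹ * ∑ m, ∑ y, outProb W (ofList enc D hD) m y * if m ∈ D y then 0 else 1 := by
  simp only [Perr, ofList]
  congr! 4 with m _ y
  rw [Finset.sum_eq_single (D y)] <;> simp +contextual

end ofList

def appendEnc (e₁ : Fin M → (t : Fin n₁) → (Fin t.1 → Y) → X)
    (e₂ : (t : Fin n₂) → (Fin t.1 → Y) → X) : Fin M → (t : Fin (n₁ + n₂)) → (Fin t.1 → Y) → X :=
  fun m t p => if ht : t.1 < n₁ then e₁ m ⟨t, ht⟩ p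
    else e₂ ⟨t - n₁, by omega⟩ fun i => p ⟨n₁ + i, by have : (i : ℕ) < t - n₁ := i.2; omega⟩

section Restrict

noncomputable def restrict (c : FBCode X Y M n L) (f : Fin K ↪ Fin M) : FBCode X Y K n L where
  enc i := c.enc (f i)
  dec y o' := ∑ o with o.map (·.preimage f f.injective.injOn) = o', c.dec y o
  dec_nonneg _ _ := Finset.sum_nonneg fun _ _ => c.dec_nonneg _ _
  dec_sum y := by rw [Finset.sum_fiberwise, c.dec_sum]
  dec_size y S' h := by
    obtain ⟨o, ho, hdo⟩ := Finset.exists_ne_zero_of_sum_ne_zero h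
    obtain ⟨S, rfl, rfl⟩ : ∃ S, o = some S ∧ S.preimage f _ = S' := by
      simpa using (Finset.mem_filter.1 ho).2
    exact (Finset.card_le_card_of_injOn f (fun i hi => by simpa using hi)
      f.injective.injOn).trans (c.dec_size y S hdo)

variable (c : FBCode X Y M n L) (f : Fin K ↪ Fin M)

theorem outProb_restrict (i : Fin K) (y : Fin n → Y) :
    outProb W (c.restrict f) i y = outProb W c (f i) y := rfl

theorem restrict_dec_none (y : Fin n → Y) : (c.restrict f).dec y none = c.dec y none := by
  simp [restrict, Finset.sum_filter]

theorem eraProb_restrict (i : Fin K) : eraProb W (c.restrict f) i = eraProb W c (f i) := by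
  simp only [eraProb, outProb_restrict, restrict_dec_none]

theorem NoErrorAt.restrict {i : Fin K} (h : NoErrorAt W c (f i)) :
    NoErrorAt W (c.restrict f) i := by
  intro y S' hi
  change outProb W c (f i) y * ∑ o with _, c.dec y o = 0
  rw [Finset.mul_sum]
  refine Finset.sum_eq_zero fun o ho => ?_
  obtain ⟨S, rfl, rfl⟩ : ∃ S, o = some S ∧ S.preimage f _ = S' := by
    simpa using (Finset.mem_filter.1 ho).2
  exact h y S (by simpa using hi)

end Restrict

section Split

variable (c : FBCode X Y M (n₁ + n₂) L)

def suffix (y₁ : Fin n₁ → Y) : FBCode X Y M n₂ L where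
  enc m t p := c.enc m (Fin.natAdd n₁ t) (Fin.append y₁ p)
  dec y₂ := c.dec (Fin.append y₁ y₂)
  dec_nonneg _ := c.dec_nonneg _
  dec_sum _ := c.dec_sum _
  dec_size _ := c.dec_size _

def prefixEnc : Fin M → (t : Fin n₁) → (Fin t.1 → Y) → X :=
  fun m t => c.enc m (Fin.castAdd n₂ t)

noncomputable def prefixProb (W : X → Y → ℝ) (m : Fin M) (y₁ : Fin n₁ → Y) : ℝ :=
  ∏ t : Fin n₁, W (c.prefixEnc m t fun i => y₁ ⟨i, i.2.trans t.2⟩) (y₁ t)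

theorem prefixProb_nonneg (hW0 : ∀ x y, 0 ≤ W x y) (m : Fin M) (y₁ : Fin n₁ → Y) :
    0 ≤ c.prefixProb W m y₁ :=
  Finset.prod_nonneg fun _ _ => hW0 _ _

theorem outProb_ofList_prefixEnc (D : (Fin n₁ → Y) → Finset (Fin M)) (hD : ∀ y, (D y).card ≤ L₁) :
    outProb W (ofList c.prefixEnc D hD) = c.prefixProb W := rfl

theorem outProb_append (m : Fin M) (y₁ : Fin n₁ → Y) (y₂ : Fin n₂ → Y) :
    outProb W c m (Fin.append y₁ y₂) = c.prefixProb W m y₁ * outProb W (c.suffix y₁) m y₂ := by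
  rw [outProb, Fin.prod_univ_add]
  congr 1
  · refine Finset.prod_congr rfl fun t _ => ?_
    rw [Fin.append_left]
    congr 2
    funext i
    exact Fin.append_left y₁ y₂ ⟨i, i.2.trans t.2⟩
  · refine Finset.prod_congr rfl fun t _ => ?_
    rw [Fin.append_right]
    congr 2
    funext i
    refine Fin.addCases (fun j => ?_) (fun k => ?_) i
    · exact (Fin.append_left y₁ y₂ ⟨j, by omega⟩).trans (Fin.append_left y₁ _ j).symm
    · exact (Fin.append_right y₁ y₂ ⟨k, k.2.trans t.2⟩).trans
        (Fin.append_right y₁ (fun i : Fin t => y₂ ⟨i, i.2.trans t.2⟩) k).symm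

theorem eraProb_eq_sum_prefixProb (m : Fin M) :
    eraProb W c m = ∑ y₁, c.prefixProb W m y₁ * eraProb W (c.suffix y₁) m := by
  rw [eraProb, ← (Fin.appendEquiv n₁ n₂).sum_comp, Fintype.sum_prod_type]
  refine Finset.sum_congr rfl fun y₁ _ => ?_
  rw [eraProb, Finset.mul_sum]
  refine Finset.sum_congr rfl fun y₂ _ => ?_
  rw [← mul_assoc, ← outProb_append]
  rfl

theorem NoErrorAt.suffix {m : Fin M} (h : NoErrorAt W c m) {y₁ : Fin n₁ → Y}
    (hy₁ : c.prefixProb W m y₁ ≠ 0) : NoErrorAt W (c.suffix y₁) m := by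
  intro y₂ S hm
  have := h (Fin.append y₁ y₂) S hm
  rw [outProb_append, mul_assoc] at this
  exact (mul_eq_zero.1 this).resolve_left hy₁

noncomputable def lowErasureSet (W : X → Y → ℝ) (r : ℝ) (y₁ : Fin n₁ → Y) : Finset (Fin M) :=
  {m | c.prefixProb W m y₁ ≠ 0 ∧ eraProb W (c.suffix y₁) m < r}

end Split

end FBCode

open FBCode

section

variable {X Y : Type} [Fintype X] [Fintype Y] {W : X → Y → ℝ} {M K n n₁ n₂ L L₁ : ℕ}

theorem PeraMin_le (hW0 : ∀ x y, 0 ≤ W x y) (c : FBCode X Y M n L) (hc : Perr W c = 0) :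
    PeraMin W M n L ≤ Pera W c :=
  csInf_le ⟨0, by rintro _ ⟨c', -, rfl⟩; exact Pera_nonneg hW0 c'⟩ ⟨c, hc, rfl⟩

theorem PeMin_le (hW0 : ∀ x y, 0 ≤ W x y) {p : ℝ} (c : FBCode X Y M n L) (hc : Pera W c ≤ p) :
    PeMin W M n L p ≤ Perr W c :=
  csInf_le ⟨0, by rintro _ ⟨c', -, rfl⟩; exact Perr_nonneg hW0 c'⟩ ⟨c, hc, rfl⟩

theorem PeraMin_nonneg (hW0 : ∀ x y, 0 ≤ W x y) : 0 ≤ PeraMin W M n L :=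
  Real.sInf_nonneg <| by rintro _ ⟨c, -, rfl⟩; exact Pera_nonneg hW0 c

/-- Without any code of length `n₁ + n₂` one of the two infima is `sInf ∅ = 0`. -/
theorem PeMin_mul_PeraMin_eq_zero_of_isEmpty {K L' : ℕ} {p : ℝ} (hK : 0 < K)
    (h : IsEmpty (FBCode X Y M (n₁ + n₂) L)) :
    PeMin W M n₁ L₁ p * PeraMin W K n₂ L' = 0 := by
  rcases isEmpty_or_nonempty (FBCode X Y M n₁ L₁) with h₁ | ⟨⟨c₁⟩⟩
  · simp [PeMin]
  rcases isEmpty_or_nonempty (FBCode X Y K n₂ L') with h₂ | ⟨⟨c₂⟩⟩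
  · simp [PeraMin]
  exact h.elim (erasing (appendEnc c₁.enc (c₂.enc ⟨0, hK⟩)))

namespace FBCode

theorem exists_PeraMin_le_eraProb (hW0 : ∀ x y, 0 ≤ W x y) (c : FBCode X Y M n L)
    {S : Finset (Fin M)} (hK : 0 < K) (hS : K ≤ S.card) (hS0 : ∀ m ∈ S, NoErrorAt W c m) :
    ∃ m ∈ S, PeraMin W K n L ≤ eraProb W c m := by
  by_contra! hlt
  obtain ⟨T, hTS, hT⟩ := Finset.exists_subset_card_eq hS
  set f := (T.orderEmbOfFin hT).toEmbedding
  have hfS : ∀ i, f i ∈ S := fun i => hTS (T.orderEmbOfFin_mem hT i)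
  have hle : PeraMin W K n L ≤ (K : ℝ)⁻¹ * ∑ i, eraProb W c (f i) := by
    simpa only [Pera_eq_sum_eraProb, eraProb_restrict] using PeraMin_le hW0 (c.restrict f)
      ((Perr_eq_zero_iff hW0 _).2 fun i => (hS0 _ (hfS i)).restrict c f)
  have hsum : ∑ i, eraProb W c (f i) < K * PeraMin W K n L := by
    simpa using Finset.sum_lt_sum_of_nonempty (Finset.univ_nonempty_iff.2 ⟨⟨0, hK⟩⟩)
      fun i _ => hlt _ (hfS i)
  exact hle.not_gt ((inv_mul_lt_iff₀ (by exact_mod_cast hK)).2 hsum)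

section Split

variable (c : FBCode X Y M (n₁ + n₂) L)

theorem card_lowErasureSet_le (hW0 : ∀ x y, 0 ≤ W x y) (hc : Perr W c = 0) (y₁ : Fin n₁ → Y) :
    (c.lowErasureSet W (PeraMin W (L₁ + 1) n₂ L) y₁).card ≤ L₁ := by
  by_contra! hcard
  have hfree : ∀ m ∈ c.lowErasureSet W (PeraMin W (L₁ + 1) n₂ L) y₁,
      NoErrorAt W (c.suffix y₁) m := fun m hm =>
    ((Perr_eq_zero_iff hW0 c).1 hc m).suffix c (Finset.mem_filter.1 hm).2.1
  obtain ⟨m, hm, hle⟩ := exists_PeraMin_le_eraProb hW0 (c.suffix y₁) L₁.succ_pos hcard hfree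
  exact (Finset.mem_filter.1 hm).2.2.not_ge hle

theorem PeMin_mul_PeraMin_le_Pera (hW0 : ∀ x y, 0 ≤ W x y) (hc : Perr W c = 0) :
    PeMin W M n₁ L₁ 0 * PeraMin W (L₁ + 1) n₂ L ≤ Pera W c := by
  set r := PeraMin W (L₁ + 1) n₂ L
  set D := c.lowErasureSet W r
  have hD : ∀ y₁, (D y₁).card ≤ L₁ := c.card_lowErasureSet_le hW0 hc
  have hterm : ∀ m y₁, c.prefixProb W m y₁ * (if m ∈ D y₁ then 0 else 1) * r ≤
      c.prefixProb W m y₁ * eraProb W (c.suffix y₁) m := by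
    intro m y₁
    by_cases hm : m ∈ D y₁
    · simpa [hm] using mul_nonneg (c.prefixProb_nonneg hW0 m y₁) (eraProb_nonneg hW0 _ m)
    by_cases h0 : c.prefixProb W m y₁ = 0
    · simp [h0]
    have hr : r ≤ eraProb W (c.suffix y₁) m :=
      not_lt.1 fun h => hm (Finset.mem_filter.2 ⟨Finset.mem_univ m, h0, h⟩)
    simpa [hm] using mul_le_mul_of_nonneg_left hr (c.prefixProb_nonneg hW0 m y₁)
  calc PeMin W M n₁ L₁ 0 * r ≤ Perr W (ofList c.prefixEnc D hD) * r :=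
        mul_le_mul_of_nonneg_right (PeMin_le hW0 _ (Pera_ofList _ _ _).le) (PeraMin_nonneg hW0)
    _ = (M : ℝ)⁻¹ * ∑ m, ∑ y₁, c.prefixProb W m y₁ * (if m ∈ D y₁ then 0 else 1) * r := by
        simp only [Perr_ofList, outProb_ofList_prefixEnc, mul_assoc, Finset.sum_mul]
    _ ≤ (M : ℝ)⁻¹ * ∑ m, ∑ y₁, c.prefixProb W m y₁ * eraProb W (c.suffix y₁) m := by
        refine mul_le_mul_of_nonneg_left ?_ (by positivity)
        exact Finset.sum_le_sum fun m _ => Finset.sum_le_sum fun y₁ _ => hterm m y₁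
    _ = Pera W c := by simp only [Pera_eq_sum_eraProb, eraProb_eq_sum_prefixProb]

end Split

end FBCode

end

theorem PeraMin_product_bound_general {X Y : Type} [Fintype X] [Fintype Y]
    (W : X → Y → ℝ) (hW0 : ∀ x y, 0 ≤ W x y)
    (n M L : ℕ) (n₁ : ℕ) (hn₁ : n₁ ≤ n) (L₁ : ℕ) :
    PeMin (X := X) (Y := Y) W M n₁ L₁ 0 *
        PeraMin (X := X) (Y := Y) W (L₁ + 1) (n - n₁) L
      ≤ PeraMin (X := X) (Y := Y) W M n L := by
  obtain ⟨n₂, rfl⟩ := Nat.exists_eq_add_of_le hn₁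
  rw [Nat.add_sub_cancel_left]
  rcases isEmpty_or_nonempty (FBCode X Y M (n₁ + n₂) L) with h | ⟨⟨c₀⟩⟩
  · rw [PeMin_mul_PeraMin_eq_zero_of_isEmpty L₁.succ_pos h]
    simp [PeraMin]
  · refine le_csInf ⟨_, erasing c₀.enc, Perr_erasing _, rfl⟩ ?_
    rintro _ ⟨c, hc, rfl⟩
    exact c.PeMin_mul_PeraMin_le_Pera hW0 hc

/-- product lower bound on the minimum erasure probability of
error-free feedback codes:
`P_era(M,n,L) ≥ P_e(M,n₁,L₁,0) · P_era(L₁+1, n−n₁, L)`. -/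
theorem PeraMin_product_bound {X Y : Type} [Fintype X] [Fintype Y]
    (W : X → Y → ℝ) (hW0 : ∀ x y, 0 ≤ W x y) (hW1 : ∀ x, ∑ y, W x y = 1)
    (n M L : ℕ) (n₁ : ℕ) (hn₁ : n₁ ≤ n) (L₁ : ℕ) :
    PeMin (X := X) (Y := Y) W M n₁ L₁ 0 *
        PeraMin (X := X) (Y := Y) W (L₁ + 1) (n - n₁) L
      ≤ PeraMin (X := X) (Y := Y) W M n L :=
  PeraMin_product_bound_general W hW0 n M L n₁ hn₁ L₁
end

section
/- For any probability distribution P on a finite input alphabet X and DMC W, define e(R, P, Q) = min over stochastic matrices V with I(P, V) ≤ R and output marginal PV = Q of the conditional divergence D(V‖W|P) (with value +∞ if no such V exists). Then e(R, P, Q) is jointly convex in the pair (R, Q). -/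
/-! The constraint `PV = Q` is linear in `V`, and both `I(P, V)` and `D(V‖W|P)` are convex in
`V` on nonnegative matrices: the divergence because `v ↦ v log (v / w)` is convex, the mutual
information by the log-sum inequality, since the output marginal `PV` also moves linearly with
`V`. Hence the mixture `γ Va + (1 - γ) Vb` of test channels feasible for `(Ra, Qa)` and
`(Rb, Qb)` is feasible for the mixed pair, with divergence at most the mixed divergence; taking
infima gives the convexity of `e`. -/

open scoped BigOperators ENNReal

/-- `e(R, P, Q)`: the minimum conditional divergence `D(V‖W|P)` over stochastic
matrices `V` (absolutely continuous with respect to `W` where `P` is positive)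
with mutual information `I(P,V) ≤ R` and output marginal `PV = Q`; `+∞` if no
such `V` exists. -/
noncomputable def eSphere {X Y : Type} [Fintype X] [Fintype Y]
    (W : X → Y → ℝ) (P : X → ℝ) (R : ℝ) (Q : Y → ℝ) : ℝ≥0∞ :=
  sInf {d | ∃ V : X → Y → ℝ, (∀ a b, 0 ≤ V a b) ∧ (∀ a, ∑ b, V a b = 1) ∧
    (∀ a b, P a ≠ 0 → W a b = 0 → V a b = 0) ∧
    (∑ a, ∑ b, P a * V a b * Real.log (V a b / ∑ a', P a' * V a' b)) ≤ R ∧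
    (∀ b, ∑ a, P a * V a b = Q b) ∧
    d = ENNReal.ofReal (∑ a, P a * ∑ b, V a b * Real.log (V a b / W a b))}

open Real

theorem ENNReal.sInf_le_mul_sInf_add_mul_sInf {s t u : Set ℝ≥0∞} {a b : ℝ≥0∞}
    (ha₀ : a ≠ 0) (hb₀ : b ≠ 0) (ha : a ≠ ⊤) (hb : b ≠ ⊤)
    (h : ∀ x ∈ s, ∀ y ∈ t, sInf u ≤ a * x + b * y) :
    sInf u ≤ a * sInf s + b * sInf t := by
  simp only [sInf_eq_iInf (s := s), sInf_eq_iInf (s := t), ENNReal.mul_iInf_of_ne ha₀ ha,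
    ENNReal.mul_iInf_of_ne hb₀ hb, ENNReal.iInf_add, ENNReal.add_iInf]
  exact le_iInf₂ fun y hy => le_iInf₂ fun x hx => h x hx y hy

theorem convexOn_mul_log_div (w : ℝ) : ConvexOn ℝ (Set.Ici 0) fun v => v * log (v / w) := by
  rcases eq_or_ne w 0 with rfl | hw
  · -- `v / 0 = 0` in Lean, so the function vanishes identically
    simpa using convexOn_const (0 : ℝ) (convex_Ici 0)
  have h : (fun v => v * log (v / w)) = fun v => v * log v + (-log w) * v := by
    ext v
    rcases eq_or_ne v 0 with rfl | hv
    · simp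
    rw [log_div hv hw]; ring
  rw [h]
  exact convexOn_mul_log.add ((LinearMap.mul ℝ ℝ (-log w)).convexOn (convex_Ici 0))

theorem add_mul_log_div_add_le {a₁ a₂ b₁ b₂ : ℝ} (ha₁ : 0 ≤ a₁) (ha₂ : 0 ≤ a₂)
    (hb₁ : 0 ≤ b₁) (hb₂ : 0 ≤ b₂) (h₁ : b₁ = 0 → a₁ = 0) (h₂ : b₂ = 0 → a₂ = 0) :
    (a₁ + a₂) * log ((a₁ + a₂) / (b₁ + b₂)) ≤ a₁ * log (a₁ / b₁) + a₂ * log (a₂ / b₂) := by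
  rcases hb₁.eq_or_lt with rfl | hb₁
  · simp [h₁ rfl]
  rcases hb₂.eq_or_lt with rfl | hb₂
  · simp [h₂ rfl]
  have hB : 0 < b₁ + b₂ := by linarith
  -- Jensen for `x log x` at the points `aᵢ / bᵢ` with weights `bᵢ / (b₁ + b₂)`
  have key := convexOn_mul_log.2 (Set.mem_Ici.2 (div_nonneg ha₁ hb₁.le))
    (Set.mem_Ici.2 (div_nonneg ha₂ hb₂.le)) (div_nonneg hb₁.le hB.le) (div_nonneg hb₂.le hB.le)
    (by field_simp)
  simp only [smul_eq_mul] at key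
  rw [show b₁ / (b₁ + b₂) * (a₁ / b₁) + b₂ / (b₁ + b₂) * (a₂ / b₂) = (a₁ + a₂) / (b₁ + b₂) by
    field_simp] at key
  calc (a₁ + a₂) * log ((a₁ + a₂) / (b₁ + b₂))
      = (b₁ + b₂) * ((a₁ + a₂) / (b₁ + b₂) * log ((a₁ + a₂) / (b₁ + b₂))) := by field_simp
    _ ≤ (b₁ + b₂) * (b₁ / (b₁ + b₂) * (a₁ / b₁ * log (a₁ / b₁))
          + b₂ / (b₁ + b₂) * (a₂ / b₂ * log (a₂ / b₂))) := mul_le_mul_of_nonneg_left key hB.le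
    _ = a₁ * log (a₁ / b₁) + a₂ * log (a₂ / b₂) := by field_simp

theorem smul_add_smul_mul_log_div_le {s t x₁ x₂ y₁ y₂ : ℝ} (hs : 0 ≤ s) (ht : 0 ≤ t)
    (hx₁ : 0 ≤ x₁) (hx₂ : 0 ≤ x₂) (hy₁ : 0 ≤ y₁) (hy₂ : 0 ≤ y₂)
    (h₁ : y₁ = 0 → x₁ = 0) (h₂ : y₂ = 0 → x₂ = 0) :
    (s * x₁ + t * x₂) * log ((s * x₁ + t * x₂) / (s * y₁ + t * y₂))
      ≤ s * (x₁ * log (x₁ / y₁)) + t * (x₂ * log (x₂ / y₂)) := by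
  have scale : ∀ c x y : ℝ, c * x * log (c * x / (c * y)) = c * (x * log (x / y)) := by
    intro c x y
    rcases eq_or_ne c 0 with rfl | hc
    · simp
    rw [mul_div_mul_left _ _ hc, mul_assoc]
  rw [← scale s, ← scale t]
  refine add_mul_log_div_add_le (by positivity) (by positivity) (by positivity) (by positivity)
    (fun h => ?_) (fun h => ?_)
  · rcases mul_eq_zero.1 h with h | h <;> simp [h, h₁]
  · rcases mul_eq_zero.1 h with h | h <;> simp [h, h₂]

section Channel

variable {X Y : Type*} [Fintype X] [Fintype Y]

noncomputable def mutualInfo (P : X → ℝ) (V : X → Y → ℝ) : ℝ :=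
  ∑ a, ∑ b, P a * V a b * log (V a b / ∑ a', P a' * V a' b)

noncomputable def condDivergence (W : X → Y → ℝ) (P : X → ℝ) (V : X → Y → ℝ) : ℝ :=
  ∑ a, P a * ∑ b, V a b * log (V a b / W a b)

theorem eq_zero_of_sum_mul_eq_zero {P v : X → ℝ} (hP : ∀ a, 0 ≤ P a) (hv : ∀ a, 0 ≤ v a)
    {a : X} (ha : P a ≠ 0) (h : ∑ a', P a' * v a' = 0) : v a = 0 :=
  (mul_eq_zero.1 ((Finset.sum_eq_zero_iff_of_nonneg fun a' _ => mul_nonneg (hP a') (hv a')).1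
    h a (Finset.mem_univ a))).resolve_left ha

theorem convexOn_condDivergence (W : X → Y → ℝ) {P : X → ℝ} (hP : ∀ a, 0 ≤ P a) :
    ConvexOn ℝ (Set.Ici 0) (condDivergence W P) := by
  refine ⟨convex_Ici 0, fun V hV V' hV' s t hs ht hst => ?_⟩
  simp only [condDivergence, smul_eq_mul, Finset.mul_sum, ← Finset.sum_add_distrib,
    Pi.add_apply, Pi.smul_apply]
  refine Finset.sum_le_sum fun a _ => Finset.sum_le_sum fun b _ => ?_
  have h := (convexOn_mul_log_div (W a b)).2 (hV a b) (hV' a b) hs ht hst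
  simp only [smul_eq_mul] at h
  nlinarith [mul_le_mul_of_nonneg_left h (hP a)]

theorem convexOn_mutualInfo {P : X → ℝ} (hP : ∀ a, 0 ≤ P a) :
    ConvexOn ℝ (Set.Ici 0) (mutualInfo (Y := Y) P) := by
  refine ⟨convex_Ici 0, fun V hV V' hV' s t hs ht _ => ?_⟩
  have marginal : ∀ b, ∑ a, P a * (s * V a b + t * V' a b)
      = s * ∑ a, P a * V a b + t * ∑ a, P a * V' a b := fun b => by
    simp only [Finset.mul_sum, ← Finset.sum_add_distrib]
    exact Finset.sum_congr rfl fun a _ => by ring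
  simp only [mutualInfo, Pi.add_apply, Pi.smul_apply, smul_eq_mul, marginal]
  rw [Finset.mul_sum, Finset.mul_sum, ← Finset.sum_add_distrib]
  refine Finset.sum_le_sum fun a _ => ?_
  rw [Finset.mul_sum, Finset.mul_sum, ← Finset.sum_add_distrib]
  refine Finset.sum_le_sum fun b _ => ?_
  rcases eq_or_ne (P a) 0 with hPa | hPa
  · simp [hPa]
  have h := smul_add_smul_mul_log_div_le hs ht (hV a b) (hV' a b)
    (Finset.sum_nonneg fun a _ => mul_nonneg (hP a) (hV a b))
    (Finset.sum_nonneg fun a _ => mul_nonneg (hP a) (hV' a b))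
    (eq_zero_of_sum_mul_eq_zero hP (fun a => hV a b) hPa)
    (eq_zero_of_sum_mul_eq_zero hP (fun a => hV' a b) hPa)
  nlinarith [mul_le_mul_of_nonneg_left h (hP a)]

def IsTestChannel (W : X → Y → ℝ) (P : X → ℝ) (R : ℝ) (Q : Y → ℝ) (V : X → Y → ℝ) : Prop :=
  (∀ a b, 0 ≤ V a b) ∧ (∀ a, ∑ b, V a b = 1) ∧ (∀ a b, P a ≠ 0 → W a b = 0 → V a b = 0) ∧
    mutualInfo P V ≤ R ∧ ∀ b, ∑ a, P a * V a b = Q b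

theorem IsTestChannel.smul_add_smul {W : X → Y → ℝ} {P : X → ℝ} (hP : ∀ a, 0 ≤ P a)
    {Ra Rb : ℝ} {Qa Qb : Y → ℝ} {Va Vb : X → Y → ℝ}
    (ha : IsTestChannel W P Ra Qa Va) (hb : IsTestChannel W P Rb Qb Vb)
    {s t : ℝ} (hs : 0 ≤ s) (ht : 0 ≤ t) (hst : s + t = 1) :
    IsTestChannel W P (s * Ra + t * Rb) (s • Qa + t • Qb) (s • Va + t • Vb) := by
  obtain ⟨ha₀, ha₁, haW, haI, haQ⟩ := ha
  obtain ⟨hb₀, hb₁, hbW, hbI, hbQ⟩ := hb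
  refine ⟨fun a b => ?_, fun a => ?_, fun a b hPa hW => ?_, ?_, fun b => ?_⟩
  · simp only [Pi.add_apply, Pi.smul_apply, smul_eq_mul]
    have := ha₀ a b; have := hb₀ a b; positivity
  · simp only [Pi.add_apply, Pi.smul_apply, smul_eq_mul, Finset.sum_add_distrib,
      ← Finset.mul_sum, ha₁, hb₁, mul_one, hst]
  · simp [haW a b hPa hW, hbW a b hPa hW]
  · calc mutualInfo P (s • Va + t • Vb) ≤ s • mutualInfo P Va + t • mutualInfo P Vb :=
          (convexOn_mutualInfo hP).2 ha₀ hb₀ hs ht hst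
      _ ≤ s * Ra + t * Rb := by simp only [smul_eq_mul]; gcongr
  · simp only [Pi.add_apply, Pi.smul_apply, smul_eq_mul, ← haQ, ← hbQ, Finset.mul_sum,
      ← Finset.sum_add_distrib]
    exact Finset.sum_congr rfl fun a _ => by ring

end Channel

theorem eSphere_eq {X Y : Type} [Fintype X] [Fintype Y] (W : X → Y → ℝ) (P : X → ℝ) (R : ℝ)
    (Q : Y → ℝ) : eSphere W P R Q =
      sInf ((fun V => ENNReal.ofReal (condDivergence W P V)) '' {V | IsTestChannel W P R Q V}) := by
  unfold eSphere
  congr 1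
  ext d
  constructor
  · rintro ⟨V, h₀, h₁, hW, hI, hQ, rfl⟩
    exact ⟨V, ⟨h₀, h₁, hW, hI, hQ⟩, rfl⟩
  · rintro ⟨V, ⟨h₀, h₁, hW, hI, hQ⟩, rfl⟩
    exact ⟨V, h₀, h₁, hW, hI, hQ, rfl⟩

theorem eSphere_jointly_convex_general {X Y : Type} [Fintype X] [Fintype Y]
    (W : X → Y → ℝ) (P : X → ℝ) (hP0 : ∀ a, 0 ≤ P a)
    (Ra Rb : ℝ) (Qa Qb : Y → ℝ) (γ : ℝ) (hγ : γ ∈ Set.Icc (0 : ℝ) 1) :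
    eSphere W P (γ * Ra + (1 - γ) * Rb) (fun b => γ * Qa b + (1 - γ) * Qb b)
      ≤ ENNReal.ofReal γ * eSphere W P Ra Qa
        + ENNReal.ofReal (1 - γ) * eSphere W P Rb Qb := by
  obtain ⟨hγ₀, hγ₁⟩ := hγ
  rcases hγ₀.eq_or_lt with rfl | hγ₀
  · simp
  rcases hγ₁.eq_or_lt with rfl | hγ₁
  · simp
  have hγ₁' : 0 < 1 - γ := sub_pos.2 hγ₁
  simp only [eSphere_eq]
  refine ENNReal.sInf_le_mul_sInf_add_mul_sInf (by simpa) (by simpa) ENNReal.ofReal_ne_top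
    ENNReal.ofReal_ne_top ?_
  rintro _ ⟨Va, hVa, rfl⟩ _ ⟨Vb, hVb, rfl⟩
  have hV := hVa.smul_add_smul hP0 hVb hγ₀.le hγ₁'.le (by ring)
  refine (sInf_le (Set.mem_image_of_mem (fun V => ENNReal.ofReal (condDivergence W P V)) hV)).trans
    ?_
  calc ENNReal.ofReal (condDivergence W P (γ • Va + (1 - γ) • Vb))
      ≤ ENNReal.ofReal (γ * condDivergence W P Va + (1 - γ) * condDivergence W P Vb) :=
        ENNReal.ofReal_le_ofReal
          ((convexOn_condDivergence W hP0).2 hVa.1 hVb.1 hγ₀.le hγ₁'.le (by ring))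
    _ ≤ ENNReal.ofReal γ * ENNReal.ofReal (condDivergence W P Va)
          + ENNReal.ofReal (1 - γ) * ENNReal.ofReal (condDivergence W P Vb) := by
        rw [← ENNReal.ofReal_mul hγ₀.le, ← ENNReal.ofReal_mul hγ₁'.le]
        exact ENNReal.ofReal_add_le

/-- `e(R,P,Q)` is jointly convex in the pair `(R,Q)`. -/
theorem eSphere_jointly_convex {X Y : Type} [Fintype X] [Fintype Y]
    (W : X → Y → ℝ) (hW0 : ∀ x y, 0 ≤ W x y) (hW1 : ∀ x, ∑ y, W x y = 1)
    (P : X → ℝ) (hP0 : ∀ a, 0 ≤ P a) (hP1 : ∑ a, P a = 1)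
    (Ra Rb : ℝ) (Qa Qb : Y → ℝ) (γ : ℝ) (hγ : γ ∈ Set.Icc (0 : ℝ) 1) :
    eSphere W P (γ * Ra + (1 - γ) * Rb) (fun b => γ * Qa b + (1 - γ) * Qb b)
      ≤ ENNReal.ofReal γ * eSphere W P Ra Qa
        + ENNReal.ofReal (1 - γ) * eSphere W P Rb Qb :=
  eSphere_jointly_convex_general W P hP0 Ra Rb Qa Qb γ hγ
end

section
/- Fix a DMC W with transition matrices W_a(y|x₁,x₂) = W(y|x₁) and W_r(y|x₁,x₂) = W(y|x₂) on the product input alphabet X². For a joint input distribution λ on X², define h(T, λ) = min over conditional distributions U(·|x₁,x₂) with D(U‖W_a|λ) ≤ T of D(U‖W_r|λ). Then h(T, λ) = sup_{μ>0} [ −μT − (1+μ) ∑_{x₁,x₂} λ(x₁,x₂) log ∑_y W(y|x₁)^{μ/(1+μ)} W(y|x₂)^{1/(1+μ)} ]; in particular the inner minimization over U at each fixed μ is attained by the tilted channel U_s(y|x₁,x₂) = W(y|x₁)^{1−s}W(y|x₂)^s / ∑_{ỹ} W(ỹ|x₁)^{1−s}W(ỹ|x₂)^s with s = 1/(1+μ).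 -/
open scoped BigOperators

noncomputable section

variable {X Y : Type} [Fintype X] [Fintype Y]

/-- Conditional divergence `D(U‖V|λ)` on the product input alphabet `X²`. -/
def condDiv2 (lam : X × X → ℝ) (U V : X × X → Y → ℝ) : ℝ :=
  ∑ p : X × X, lam p * ∑ y, U p y * Real.log (U p y / V p y)

/-- `W_a(y|x₁,x₂) = W(y|x₁)`. -/
def Wacc (W : X → Y → ℝ) : X × X → Y → ℝ := fun p y => W p.1 y

/-- `W_r(y|x₁,x₂) = W(y|x₂)`. -/
def Wrej (W : X → Y → ℝ) : X × X → Y → ℝ := fun p y => W p.2 y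

/-- A conditional distribution on `Y` given `X²`, absolutely continuous with
respect to both `W_a` and `W_r`. -/
def IsCondDist2 (W : X → Y → ℝ) (U : X × X → Y → ℝ) : Prop :=
  (∀ p y, 0 ≤ U p y) ∧ (∀ p, ∑ y, U p y = 1) ∧
    (∀ p y, W p.1 y = 0 ∨ W p.2 y = 0 → U p y = 0)

/-- The tilted channel `U_s(y|x₁,x₂) ∝ W(y|x₁)^{1−s} W(y|x₂)^s`. -/
def tiltedU (W : X → Y → ℝ) (s : ℝ) : X × X → Y → ℝ := fun p y =>
  W p.1 y ^ (1 - s) * W p.2 y ^ s / ∑ y', W p.1 y' ^ (1 - s) * W p.2 y' ^ s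

/-- The boundary channel `U₀(y|x₁,x₂) ∝ 1{W(y|x₂)>0}·W(y|x₁)`. -/
def tiltedU0 (W : X → Y → ℝ) : X × X → Y → ℝ := fun p y =>
  (if 0 < W p.2 y then W p.1 y else 0) / ∑ y', if 0 < W p.2 y' then W p.1 y' else 0

/-- `h(T,λ) = min { D(U‖W_r|λ) : D(U‖W_a|λ) ≤ T }`. -/
def hTwo (W : X → Y → ℝ) (lam : X × X → ℝ) (T : ℝ) : ℝ :=
  sInf {d | ∃ U : X × X → Y → ℝ, IsCondDist2 W U ∧
    condDiv2 lam U (Wacc W) ≤ T ∧ d = condDiv2 lam U (Wrej W)}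

end

/-!
For `s ∈ (0,1)` the tilted channel `U_s` minimises the mixture
`s · D(U‖W_r|λ) + (1 - s) · D(U‖W_a|λ)` over all conditional distributions `U`, with minimum
`-∑ λ log Z_s` where `Z_s` is the normalising constant of `U_s`: the mixture equals
`D(U‖U_s|λ) - ∑ λ log Z_s`, and Gibbs' inequality applies. With `μ = (1 - s) / s` this mixture
is `s` times the Lagrangian, which gives weak duality. Strong duality comes from continuity
in `s`: if `D(U_s‖W_a|λ) = T` for some `s`, then `U_s` is feasible and attains the dual value;
otherwise, by the intermediate value theorem, `D(U_s‖W_a|λ) - T` has constant sign, and letting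
`s → 1` or `s → 0` (where `U_0` is feasible by assumption) closes the duality gap.
-/

open Real Filter Topology

theorem forall_le_or_forall_ge_or_exists_eq {α β : Type*} [TopologicalSpace α] [LinearOrder β]
    [TopologicalSpace β] [OrderClosedTopology β] {S : Set α} (hS : IsPreconnected S) {f : α → β}
    (hf : ContinuousOn f S) (T : β) :
    (∀ s ∈ S, f s ≤ T) ∨ (∀ s ∈ S, T ≤ f s) ∨ ∃ s ∈ S, f s = T := by
  by_contra! h
  obtain ⟨⟨s₁, hs₁, h₁⟩, ⟨s₂, hs₂, h₂⟩, hne⟩ := h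
  obtain ⟨s, hs, hfs⟩ := hS.intermediate_value hs₂ hs₁ hf ⟨h₂.le, h₁.le⟩
  exact hne s hs hfs

/-- `r s` and `a s` are the objective and the constraint value of the `s`-th candidate
minimiser. -/
theorem csInf_eq_csSup_lagrangian {a r : ℝ → ℝ} (ha : Continuous a) (hr : Continuous r)
    {T : ℝ} {P : Set ℝ}
    (hweak : ∀ s ∈ Set.Ioo (0 : ℝ) 1, ∀ d ∈ P, r s + (1 - s) / s * (a s - T) ≤ d)
    (hfeas : ∀ s ∈ Set.Ioo (0 : ℝ) 1, a s ≤ T → r s ∈ P) (hr0 : r 0 ∈ P) :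
    sInf P = sSup ((fun s => r s + (1 - s) / s * (a s - T)) '' Set.Ioo 0 1) := by
  set G : ℝ → ℝ := fun s => r s + (1 - s) / s * (a s - T)
  have hPbdd : BddBelow P := ⟨_, hweak (1 / 2) ⟨by norm_num, by norm_num⟩⟩
  have hQbdd : BddAbove (G '' Set.Ioo 0 1) :=
    ⟨r 0, by rintro _ ⟨s, hs, rfl⟩; exact hweak s hs _ hr0⟩
  have hinf : ∀ s ∈ Set.Ioo (0 : ℝ) 1, a s ≤ T → sInf P ≤ r s :=
    fun s hs h => csInf_le hPbdd (hfeas s hs h)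
  have hsup : ∀ s ∈ Set.Ioo (0 : ℝ) 1, G s ≤ sSup (G '' Set.Ioo 0 1) :=
    fun s hs => le_csSup hQbdd (Set.mem_image_of_mem G hs)
  refine le_antisymm ?_ (csSup_le ((Set.nonempty_Ioo.2 one_pos).image G) ?_)
  swap
  · rintro _ ⟨s, hs, rfl⟩
    exact le_csInf ⟨_, hr0⟩ (hweak s hs)
  rcases forall_le_or_forall_ge_or_exists_eq isPreconnected_Ioo ha.continuousOn T with
    hle | hge | ⟨s, hs, hsT⟩
  · have hlim : Tendsto (fun s => sInf P + (1 - s) / s * (a s - T)) (𝓝[<] 1) (𝓝 (sInf P)) := by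
      have : ContinuousAt (fun s => sInf P + (1 - s) / s * (a s - T)) 1 := by
        fun_prop (disch := norm_num)
      simpa using this.tendsto.mono_left nhdsWithin_le_nhds
    refine le_of_tendsto hlim ?_
    filter_upwards [Ioo_mem_nhdsLT one_pos] with s hs
    linarith [hinf s hs (hle s hs), hsup s hs]
  · have hlim : Tendsto r (𝓝[>] 0) (𝓝 (r 0)) := hr.continuousAt.continuousWithinAt
    refine (csInf_le hPbdd hr0).trans (le_of_tendsto hlim ?_)
    filter_upwards [Ioo_mem_nhdsGT (zero_lt_one' ℝ)] with s hs
    have : 0 ≤ (1 - s) / s * (a s - T) :=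
      mul_nonneg (div_nonneg (by linarith [hs.2]) hs.1.le) (sub_nonneg.2 (hge s hs))
    linarith [hsup s hs]
  · calc sInf P ≤ r s := hinf s hs hsT.le
      _ = G s := by simp [G, hsT]
      _ ≤ _ := hsup s hs

theorem one_div_one_add_mem_Ioo {μ : ℝ} (hμ : 0 < μ) : 1 / (1 + μ) ∈ Set.Ioo (0 : ℝ) 1 :=
  ⟨by positivity, by rw [div_lt_one (by linarith)]; linarith⟩

theorem setOf_exists_pos_eq_image_Ioo {F G : ℝ → ℝ} (h : ∀ μ, 0 < μ → F μ = G (1 / (1 + μ))) :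
    {v | ∃ μ : ℝ, 0 < μ ∧ v = F μ} = G '' Set.Ioo 0 1 := by
  ext v
  constructor
  · rintro ⟨μ, hμ, rfl⟩
    exact ⟨1 / (1 + μ), one_div_one_add_mem_Ioo hμ, (h μ hμ).symm⟩
  · rintro ⟨s, ⟨hs0, hs1⟩, rfl⟩
    refine ⟨(1 - s) / s, div_pos (by linarith) hs0, ?_⟩
    rw [h _ (div_pos (by linarith) hs0)]
    congr 1
    field_simp
    ring

theorem sub_le_mul_log_div {u v : ℝ} (hu : 0 ≤ u) (hv : 0 ≤ v) (hvu : v = 0 → u = 0) :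
    u - v ≤ u * log (u / v) := by
  rcases hu.eq_or_lt with rfl | hu
  · simpa using hv
  have hv : 0 < v := hv.lt_of_ne' fun h => hu.ne' (hvu h)
  have h := mul_le_mul_of_nonneg_left (one_sub_inv_le_log_of_pos (div_pos hu hv)) hu.le
  rwa [inv_div, mul_one_sub, mul_div_cancel₀ _ hu.ne'] at h

noncomputable section GeomMix

variable {Y : Type*} {a b : Y → ℝ} {s : ℝ} {y : Y}

/-- The unnormalised geometric mixture `a^(1-s) b^s`, cut down to the common support of `a`
and `b` (which matters only at `s ∈ {0, 1}`, where `0 ^ 0 = 1`). -/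
def geomMixWeight (a b : Y → ℝ) (s : ℝ) (y : Y) : ℝ :=
  if 0 < a y ∧ 0 < b y then a y ^ (1 - s) * b y ^ s else 0

theorem geomMixWeight_of_pos (h : 0 < a y ∧ 0 < b y) :
    geomMixWeight a b s y = a y ^ (1 - s) * b y ^ s :=
  if_pos h

theorem geomMixWeight_pos (h : 0 < a y ∧ 0 < b y) : 0 < geomMixWeight a b s y := by
  rw [geomMixWeight_of_pos h]
  exact mul_pos (rpow_pos_of_pos h.1 _) (rpow_pos_of_pos h.2 _)

theorem geomMixWeight_nonneg : 0 ≤ geomMixWeight a b s y := by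
  by_cases h : 0 < a y ∧ 0 < b y
  · exact (geomMixWeight_pos h).le
  · simp [geomMixWeight, h]

theorem geomMixWeight_eq_rpow (ha : ∀ y, 0 ≤ a y) (hb : ∀ y, 0 ≤ b y) (hs0 : 0 < s) (hs1 : s < 1) :
    geomMixWeight a b s y = a y ^ (1 - s) * b y ^ s := by
  by_cases h : 0 < a y ∧ 0 < b y
  · exact geomMixWeight_of_pos h
  rw [geomMixWeight, if_neg h]
  rcases not_and_or.1 h with h | h
  · rw [← (ha y).antisymm (not_lt.1 h), zero_rpow (by linarith), zero_mul]
  · rw [← (hb y).antisymm (not_lt.1 h), zero_rpow hs0.ne', mul_zero]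

theorem geomMixWeight_zero (ha : ∀ y, 0 ≤ a y) :
    geomMixWeight a b 0 y = if 0 < b y then a y else 0 := by
  by_cases hb : 0 < b y
  · rcases (ha y).eq_or_lt with h | h
    · simp [geomMixWeight, ← h]
    · simp [geomMixWeight, h, hb]
  · simp [geomMixWeight, hb]

theorem exists_pos_and_pos_of_sum_ite_pos [Fintype Y]
    (h : 0 < ∑ y, if 0 < b y then a y else 0) : ∃ y, 0 < a y ∧ 0 < b y := by
  obtain ⟨y, -, hy⟩ := Finset.exists_lt_of_sum_lt (f := fun _ => (0 : ℝ)) (by simpa using h)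
  split_ifs at hy with hb
  · exact ⟨y, hy, hb⟩
  · exact absurd hy (lt_irrefl 0)

theorem continuous_geomMixWeight (y : Y) : Continuous fun s => geomMixWeight a b s y := by
  by_cases h : 0 < a y ∧ 0 < b y
  · simp only [geomMixWeight_of_pos h]
    exact ((continuous_const_rpow h.1.ne').comp (continuous_const.sub continuous_id)).mul
      (continuous_const_rpow h.2.ne')
  · simp only [geomMixWeight, if_neg h]
    exact continuous_const

variable [Fintype Y]

def relEnt (u v : Y → ℝ) : ℝ := ∑ y, u y * log (u y / v y)

theorem relEnt_self (u : Y → ℝ) : relEnt u u = 0 := by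
  simp [relEnt]

theorem relEnt_nonneg {u v : Y → ℝ} (hu : 0 ≤ u) (hv : 0 ≤ v) (huv : ∑ y, u y = ∑ y, v y)
    (hac : ∀ y, v y = 0 → u y = 0) : 0 ≤ relEnt u v :=
  calc 0 = ∑ y, (u y - v y) := by rw [Finset.sum_sub_distrib, huv, sub_self]
    _ ≤ relEnt u v := Finset.sum_le_sum fun y _ => sub_le_mul_log_div (hu y) (hv y) (hac y)

def geomMixPartition (a b : Y → ℝ) (s : ℝ) : ℝ := ∑ y, geomMixWeight a b s y

def geomMix (a b : Y → ℝ) (s : ℝ) (y : Y) : ℝ := geomMixWeight a b s y / geomMixPartition a b s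

theorem geomMixPartition_pos (hab : ∃ y, 0 < a y ∧ 0 < b y) : 0 < geomMixPartition a b s := by
  obtain ⟨y, hy⟩ := hab
  exact Finset.sum_pos' (fun _ _ => geomMixWeight_nonneg)
    ⟨y, Finset.mem_univ y, geomMixWeight_pos hy⟩

theorem geomMix_nonneg : 0 ≤ geomMix a b s y :=
  div_nonneg geomMixWeight_nonneg (Finset.sum_nonneg fun _ _ => geomMixWeight_nonneg)

theorem geomMix_pos (hab : ∃ y, 0 < a y ∧ 0 < b y) (h : 0 < a y ∧ 0 < b y) :
    0 < geomMix a b s y :=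
  div_pos (geomMixWeight_pos h) (geomMixPartition_pos hab)

theorem geomMix_of_not_pos (h : ¬(0 < a y ∧ 0 < b y)) : geomMix a b s y = 0 := by
  simp [geomMix, geomMixWeight, h]

theorem sum_geomMix (hab : ∃ y, 0 < a y ∧ 0 < b y) : ∑ y, geomMix a b s y = 1 := by
  simp only [geomMix, ← Finset.sum_div]
  exact div_self (geomMixPartition_pos hab).ne'

theorem log_geomMix (hab : ∃ y, 0 < a y ∧ 0 < b y) (h : 0 < a y ∧ 0 < b y) :
    log (geomMix a b s y)
      = (1 - s) * log (a y) + s * log (b y) - log (geomMixPartition a b s) := by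
  rw [geomMix, log_div (geomMixWeight_pos h).ne' (geomMixPartition_pos hab).ne',
    geomMixWeight_of_pos h, log_mul (rpow_pos_of_pos h.1 _).ne' (rpow_pos_of_pos h.2 _).ne',
    log_rpow h.1, log_rpow h.2]

theorem mix_relEnt_eq (hab : ∃ y, 0 < a y ∧ 0 < b y) {u : Y → ℝ}
    (hu : ∀ y, ¬(0 < a y ∧ 0 < b y) → u y = 0) :
    s * relEnt u b + (1 - s) * relEnt u a
      = relEnt u (geomMix a b s) - (∑ y, u y) * log (geomMixPartition a b s) := by
  simp only [relEnt, Finset.mul_sum, Finset.sum_mul, ← Finset.sum_add_distrib,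
    ← Finset.sum_sub_distrib]
  refine Finset.sum_congr rfl fun y _ => ?_
  by_cases h : 0 < a y ∧ 0 < b y
  · by_cases hu0 : u y = 0
    · simp [hu0]
    rw [log_div hu0 h.2.ne', log_div hu0 h.1.ne', log_div hu0 (geomMix_pos hab h).ne',
      log_geomMix hab h]
    ring
  · simp [hu y h]

theorem mix_relEnt_geomMix (hab : ∃ y, 0 < a y ∧ 0 < b y) :
    s * relEnt (geomMix a b s) b + (1 - s) * relEnt (geomMix a b s) a
      = -log (geomMixPartition a b s) := by
  rw [mix_relEnt_eq hab fun y h => geomMix_of_not_pos h, relEnt_self, sum_geomMix hab]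
  ring

theorem neg_log_geomMixPartition_le (hab : ∃ y, 0 < a y ∧ 0 < b y) {u : Y → ℝ}
    (hu0 : ∀ y, 0 ≤ u y) (hu1 : ∑ y, u y = 1) (hu : ∀ y, ¬(0 < a y ∧ 0 < b y) → u y = 0) :
    -log (geomMixPartition a b s) ≤ s * relEnt u b + (1 - s) * relEnt u a := by
  have hgibbs : 0 ≤ relEnt u (geomMix a b s) :=
    relEnt_nonneg hu0 (fun _ => geomMix_nonneg) (by rw [hu1, sum_geomMix hab])
      fun y h => hu y fun hy => (geomMix_pos hab hy).ne' h
  rw [mix_relEnt_eq hab hu, hu1]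
  linarith

theorem continuous_geomMix (hab : ∃ y, 0 < a y ∧ 0 < b y) (y : Y) :
    Continuous fun s => geomMix a b s y :=
  (continuous_geomMixWeight y).div (continuous_finsetSum _ fun y _ => continuous_geomMixWeight y)
    fun _ => (geomMixPartition_pos hab).ne'

theorem continuous_relEnt_geomMix (hab : ∃ y, 0 < a y ∧ 0 < b y) {v : Y → ℝ}
    (hv : ∀ y, 0 < a y ∧ 0 < b y → v y ≠ 0) : Continuous fun s => relEnt (geomMix a b s) v := by
  refine continuous_finsetSum _ fun y _ => ?_
  by_cases h : 0 < a y ∧ 0 < b y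
  · exact (continuous_geomMix hab y).mul (((continuous_geomMix hab y).div_const _).log
      fun _ => div_ne_zero (geomMix_pos hab h).ne' (hv y h))
  · simp only [geomMix_of_not_pos h, zero_mul]
    exact continuous_const

end GeomMix

noncomputable section TiltedChannel

variable {X Y : Type} [Fintype Y] {W : X → Y → ℝ} {lam : X × X → ℝ} {s : ℝ}

def tiltedChannel (W : X → Y → ℝ) (s : ℝ) : X × X → Y → ℝ := fun p => geomMix (W p.1) (W p.2) s

theorem IsCondDist2.apply_eq_zero (hW0 : ∀ x y, 0 ≤ W x y) {U : X × X → Y → ℝ}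
    (hU : IsCondDist2 W U) {p : X × X} {y : Y} (h : ¬(0 < W p.1 y ∧ 0 < W p.2 y)) :
    U p y = 0 := by
  refine hU.2.2 p y ?_
  by_contra! h'
  exact h ⟨(hW0 _ _).lt_of_ne' h'.1, (hW0 _ _).lt_of_ne' h'.2⟩

theorem isCondDist2_tiltedChannel (hsupp : ∀ p : X × X, ∃ y, 0 < W p.1 y ∧ 0 < W p.2 y)
    (s : ℝ) : IsCondDist2 W (tiltedChannel W s) :=
  ⟨fun _ _ => geomMix_nonneg, fun p => sum_geomMix (hsupp p),
    fun _ _ h => geomMix_of_not_pos fun hy => h.elim hy.1.ne' hy.2.ne'⟩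

theorem tiltedU_eq_tiltedChannel (hW0 : ∀ x y, 0 ≤ W x y) (hs : s ∈ Set.Ioo (0 : ℝ) 1) :
    tiltedU W s = tiltedChannel W s := by
  ext p y
  simp only [tiltedU, tiltedChannel, geomMix, geomMixPartition,
    geomMixWeight_eq_rpow (hW0 p.1) (hW0 p.2) hs.1 hs.2]

theorem tiltedU0_eq_tiltedChannel (hW0 : ∀ x y, 0 ≤ W x y) : tiltedU0 W = tiltedChannel W 0 := by
  ext p y
  simp only [tiltedU0, tiltedChannel, geomMix, geomMixPartition, geomMixWeight_zero (hW0 p.1)]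

variable [Fintype X]

def logPartition (W : X → Y → ℝ) (lam : X × X → ℝ) (s : ℝ) : ℝ :=
  ∑ p, lam p * log (geomMixPartition (W p.1) (W p.2) s)

theorem condDiv2_eq_sum_relEnt (lam : X × X → ℝ) (U V : X × X → Y → ℝ) :
    condDiv2 lam U V = ∑ p, lam p * relEnt (U p) (V p) :=
  rfl

theorem mix_condDiv2 (U V V' : X × X → Y → ℝ) (s t : ℝ) :
    s * condDiv2 lam U V + t * condDiv2 lam U V'
      = ∑ p, lam p * (s * relEnt (U p) (V p) + t * relEnt (U p) (V' p)) := by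
  rw [condDiv2_eq_sum_relEnt, condDiv2_eq_sum_relEnt, Finset.mul_sum, Finset.mul_sum,
    ← Finset.sum_add_distrib]
  exact Finset.sum_congr rfl fun p _ => by ring

theorem mix_condDiv2_tiltedChannel (hsupp : ∀ p : X × X, ∃ y, 0 < W p.1 y ∧ 0 < W p.2 y) :
    s * condDiv2 lam (tiltedChannel W s) (Wrej W)
        + (1 - s) * condDiv2 lam (tiltedChannel W s) (Wacc W)
      = -logPartition W lam s := by
  rw [mix_condDiv2, logPartition, ← Finset.sum_neg_distrib]
  exact Finset.sum_congr rfl fun p _ => by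
    rw [← mul_neg, ← mix_relEnt_geomMix (hsupp p)]
    rfl

theorem neg_logPartition_le (hW0 : ∀ x y, 0 ≤ W x y)
    (hsupp : ∀ p : X × X, ∃ y, 0 < W p.1 y ∧ 0 < W p.2 y) (hl0 : ∀ p, 0 ≤ lam p)
    {U : X × X → Y → ℝ} (hU : IsCondDist2 W U) :
    -logPartition W lam s ≤ s * condDiv2 lam U (Wrej W) + (1 - s) * condDiv2 lam U (Wacc W) := by
  rw [mix_condDiv2, logPartition, ← Finset.sum_neg_distrib]
  refine Finset.sum_le_sum fun p _ => ?_
  rw [← mul_neg]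
  exact mul_le_mul_of_nonneg_left (neg_log_geomMixPartition_le (hsupp p) (hU.1 p) (hU.2.1 p)
    fun _ => hU.apply_eq_zero hW0) (hl0 p)

theorem mix_condDiv2_tiltedChannel_le (hW0 : ∀ x y, 0 ≤ W x y)
    (hsupp : ∀ p : X × X, ∃ y, 0 < W p.1 y ∧ 0 < W p.2 y) (hl0 : ∀ p, 0 ≤ lam p)
    {U : X × X → Y → ℝ} (hU : IsCondDist2 W U) :
    s * condDiv2 lam (tiltedChannel W s) (Wrej W)
        + (1 - s) * condDiv2 lam (tiltedChannel W s) (Wacc W)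
      ≤ s * condDiv2 lam U (Wrej W) + (1 - s) * condDiv2 lam U (Wacc W) :=
  (mix_condDiv2_tiltedChannel hsupp).trans_le (neg_logPartition_le hW0 hsupp hl0 hU)

theorem continuous_condDiv2_tiltedChannel (hsupp : ∀ p : X × X, ∃ y, 0 < W p.1 y ∧ 0 < W p.2 y)
    {V : X × X → Y → ℝ} (hV : ∀ p y, 0 < W p.1 y ∧ 0 < W p.2 y → V p y ≠ 0) :
    Continuous fun s => condDiv2 lam (tiltedChannel W s) V :=
  continuous_finsetSum _ fun p _ =>
    continuous_const.mul (continuous_relEnt_geomMix (hsupp p) (hV p))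

theorem lagrangian_tiltedChannel_le (hW0 : ∀ x y, 0 ≤ W x y)
    (hsupp : ∀ p : X × X, ∃ y, 0 < W p.1 y ∧ 0 < W p.2 y) (hl0 : ∀ p, 0 ≤ lam p)
    {μ : ℝ} (hμ : 0 < μ) {U : X × X → Y → ℝ} (hU : IsCondDist2 W U) :
    condDiv2 lam (tiltedChannel W (1 / (1 + μ))) (Wrej W)
        + μ * condDiv2 lam (tiltedChannel W (1 / (1 + μ))) (Wacc W)
      ≤ condDiv2 lam U (Wrej W) + μ * condDiv2 lam U (Wacc W) := by
  have h := mix_condDiv2_tiltedChannel_le hW0 hsupp hl0 hU (s := 1 / (1 + μ))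
  have hμ' : 1 - 1 / (1 + μ) = μ / (1 + μ) := by field_simp; ring
  refine le_of_mul_le_mul_left (a := 1 / (1 + μ)) ?_ (by positivity)
  linear_combination h - (condDiv2 lam (tiltedChannel W (1 / (1 + μ))) (Wacc W)
    - condDiv2 lam U (Wacc W)) * hμ'

theorem lagrangian_tiltedChannel_le_of_feasible (hW0 : ∀ x y, 0 ≤ W x y)
    (hsupp : ∀ p : X × X, ∃ y, 0 < W p.1 y ∧ 0 < W p.2 y) (hl0 : ∀ p, 0 ≤ lam p)
    {T : ℝ} (hs : s ∈ Set.Ioo (0 : ℝ) 1) {U : X × X → Y → ℝ} (hU : IsCondDist2 W U)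
    (hfeas : condDiv2 lam U (Wacc W) ≤ T) :
    condDiv2 lam (tiltedChannel W s) (Wrej W)
        + (1 - s) / s * (condDiv2 lam (tiltedChannel W s) (Wacc W) - T)
      ≤ condDiv2 lam U (Wrej W) := by
  have h := mix_condDiv2_tiltedChannel_le hW0 hsupp hl0 hU (s := s)
  have hslack : (1 - s) * (condDiv2 lam U (Wacc W) - T) ≤ 0 :=
    mul_nonpos_of_nonneg_of_nonpos (by linarith [hs.2]) (by linarith)
  refine le_of_mul_le_mul_left ?_ hs.1
  have hs0 : s ≠ 0 := hs.1.ne'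
  calc s * (condDiv2 lam (tiltedChannel W s) (Wrej W)
        + (1 - s) / s * (condDiv2 lam (tiltedChannel W s) (Wacc W) - T))
      = s * condDiv2 lam (tiltedChannel W s) (Wrej W)
        + (1 - s) * condDiv2 lam (tiltedChannel W s) (Wacc W) - (1 - s) * T := by
        field_simp
        ring
    _ ≤ s * condDiv2 lam U (Wrej W) := by linarith

theorem setOf_dual_eq_image_lagrangian (hW0 : ∀ x y, 0 ≤ W x y)
    (hsupp : ∀ p : X × X, ∃ y, 0 < W p.1 y ∧ 0 < W p.2 y) (T : ℝ) :
    {v | ∃ μ : ℝ, 0 < μ ∧ v = -μ * T - (1 + μ) * ∑ p : X × X, lam p *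
        log (∑ y, W p.1 y ^ (μ / (1 + μ)) * W p.2 y ^ (1 / (1 + μ)))}
      = (fun s => condDiv2 lam (tiltedChannel W s) (Wrej W)
          + (1 - s) / s * (condDiv2 lam (tiltedChannel W s) (Wacc W) - T)) '' Set.Ioo 0 1 := by
  refine setOf_exists_pos_eq_image_Ioo fun μ hμ => ?_
  obtain ⟨hs0, hs1⟩ := one_div_one_add_mem_Ioo hμ
  set s := 1 / (1 + μ) with hs
  have hsμ : s * (1 + μ) = 1 := by rw [hs]; field_simp
  have hμs : (1 - s) / s = μ := by rw [hs]; field_simp; ring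
  have hexp : μ / (1 + μ) = 1 - s := by rw [hs]; field_simp; ring
  have hZ : ∀ p : X × X,
      ∑ y, W p.1 y ^ (1 - s) * W p.2 y ^ s = geomMixPartition (W p.1) (W p.2) s :=
    fun p => by simp only [geomMixPartition, geomMixWeight_eq_rpow (hW0 p.1) (hW0 p.2) hs0 hs1]
  have hmix := mix_condDiv2_tiltedChannel (lam := lam) hsupp (s := s)
  simp only [hexp, hZ]
  rw [logPartition] at hmix
  linear_combination (-(1 + μ)) * hmix
    + (condDiv2 lam (tiltedChannel W s) (Wrej W) - condDiv2 lam (tiltedChannel W s) (Wacc W)) * hsμ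
    - (condDiv2 lam (tiltedChannel W s) (Wacc W) - T) * hμs

end TiltedChannel

theorem hTwo_variational_general {X Y : Type} [Fintype X] [Fintype Y]
    (W : X → Y → ℝ) (hW0 : ∀ x y, 0 ≤ W x y)
    (hsupp : ∀ p : X × X, 0 < ∑ y, if 0 < W p.2 y then W p.1 y else 0)
    (lam : X × X → ℝ) (hl0 : ∀ p, 0 ≤ lam p)
    (T : ℝ) (hT : condDiv2 lam (tiltedU0 W) (Wacc W) ≤ T) :
    hTwo W lam T
        = sSup {v | ∃ μ : ℝ, 0 < μ ∧
            v = -μ * T - (1 + μ) * ∑ p : X × X, lam p *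
              Real.log (∑ y, W p.1 y ^ (μ / (1 + μ)) * W p.2 y ^ (1 / (1 + μ)))} ∧
      ∀ μ : ℝ, 0 < μ → ∀ U : X × X → Y → ℝ, IsCondDist2 W U →
        condDiv2 lam (tiltedU W (1 / (1 + μ))) (Wrej W)
            + μ * condDiv2 lam (tiltedU W (1 / (1 + μ))) (Wacc W)
          ≤ condDiv2 lam U (Wrej W) + μ * condDiv2 lam U (Wacc W) := by
  have hab : ∀ p : X × X, ∃ y, 0 < W p.1 y ∧ 0 < W p.2 y :=
    fun p => exists_pos_and_pos_of_sum_ite_pos (hsupp p)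
  refine ⟨?_, fun μ hμ U hU => ?_⟩
  · rw [hTwo, setOf_dual_eq_image_lagrangian hW0 hab T]
    refine csInf_eq_csSup_lagrangian
      (continuous_condDiv2_tiltedChannel hab fun p y h => h.1.ne')
      (continuous_condDiv2_tiltedChannel hab fun p y h => h.2.ne') ?_ ?_ ?_
    · rintro s hs _ ⟨U, hU, hfeas, rfl⟩
      exact lagrangian_tiltedChannel_le_of_feasible hW0 hab hl0 hs hU hfeas
    · exact fun s _ hs => ⟨_, isCondDist2_tiltedChannel hab s, hs, rfl⟩
    · exact ⟨_, isCondDist2_tiltedChannel hab 0, tiltedU0_eq_tiltedChannel hW0 ▸ hT, rfl⟩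
  · rw [tiltedU_eq_tiltedChannel hW0 (one_div_one_add_mem_Ioo hμ)]
    exact lagrangian_tiltedChannel_le hW0 hab hl0 hμ hU

/-- variational characterization of `h(T,λ)`:
`h(T,λ) = sup_{μ>0} [ −μT − (1+μ) ∑ λ(x₁,x₂) log ∑_y W(y|x₁)^{μ/(1+μ)} W(y|x₂)^{1/(1+μ)} ]`,
and for each fixed `μ > 0` the Lagrangian `D(U‖W_r|λ) + μ D(U‖W_a|λ)` is minimized
over conditional distributions `U` by the tilted channel `U_s` with `s = 1/(1+μ)`. -/
theorem hTwo_variational {X Y : Type} [Fintype X] [Fintype Y]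
    (W : X → Y → ℝ) (hW0 : ∀ x y, 0 ≤ W x y) (hW1 : ∀ x, ∑ y, W x y = 1)
    (hsupp : ∀ p : X × X, 0 < ∑ y, if 0 < W p.2 y then W p.1 y else 0)
    (lam : X × X → ℝ) (hl0 : ∀ p, 0 ≤ lam p) (hl1 : ∑ p, lam p = 1)
    (T : ℝ) (hT : condDiv2 lam (tiltedU0 W) (Wacc W) ≤ T) :
    hTwo W lam T
        = sSup {v | ∃ μ : ℝ, 0 < μ ∧
            v = -μ * T - (1 + μ) * ∑ p : X × X, lam p *
              Real.log (∑ y, W p.1 y ^ (μ / (1 + μ)) * W p.2 y ^ (1 / (1 + μ)))} ∧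
      ∀ μ : ℝ, 0 < μ → ∀ U : X × X → Y → ℝ, IsCondDist2 W U →
        condDiv2 lam (tiltedU W (1 / (1 + μ))) (Wrej W)
            + μ * condDiv2 lam (tiltedU W (1 / (1 + μ))) (Wacc W)
          ≤ condDiv2 lam U (Wrej W) + μ * condDiv2 lam U (Wacc W) :=
  hTwo_variational_general W hW0 hsupp lam hl0 T hT
end

section
/- For any DMC W, any feedback encoding scheme of length n with two messages m₁, m₂, and any erasure-free decoder with decoding regions D₁, D₂ partitioning Y^n: if the error probability of message m₂ is zero (P(D₁ | m₂) = 0), then the error probability of message m₁ satisfies P(D₂ | m₁) ≥ exp(−n T₀), where T₀ = max_{x, x̃} [ −log ∑_{y : W(y|x̃) > 0} W(y|x) ]. -/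
/-!
Change of measure. Let `Q` be the output law obtained when, at each time, the output is drawn
from `W(· | f_t(m₁, y^{t-1}))` conditioned on the support of `W(· | f_t(m₂, y^{t-1}))`. Each
conditional factor of `Q` is at most `e^{T₀}` times that of `P(· | m₁)`, so
`Q ≤ e^{n T₀} P(· | m₁)`; and `Q` vanishes wherever `P(· | m₂)` does, in particular on `D₁`.
Hence `1 = Q(D₂) ≤ e^{n T₀} P(D₂ | m₁)`.
-/

open Finset Real

def causalProd {Y : Type*} {n : ℕ} (q : (t : Fin n) → (Fin t → Y) → Y → ℝ)
    (y : Fin n → Y) : ℝ :=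
  ∏ t, q t (fun i => y ⟨i, i.2.trans t.2⟩) (y t)

section causalProd

variable {Y : Type*} {n : ℕ}

theorem causalProd_snoc (q : (t : Fin (n + 1)) → (Fin t → Y) → Y → ℝ) (z : Fin n → Y)
    (a : Y) :
    causalProd q (Fin.snoc z a) = causalProd (fun t => q t.castSucc) z * q (Fin.last n) z a := by
  rw [causalProd, Fin.prod_univ_castSucc, Fin.snoc_last]
  congr 1
  · refine prod_congr rfl fun t _ => ?_
    rw [Fin.snoc_castSucc]
    congr 1
    funext i
    exact Fin.snoc_castSucc (α := fun _ => Y) a z ⟨i, i.2.trans t.2⟩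
  · congr 1
    funext i
    exact Fin.snoc_castSucc (α := fun _ => Y) a z i

theorem sum_causalProd [Fintype Y] (q : (t : Fin n) → (Fin t → Y) → Y → ℝ)
    (hq : ∀ t pre, ∑ b, q t pre b = 1) : ∑ y, causalProd q y = 1 := by
  induction n with
  | zero => simp [causalProd]
  | succ n ih =>
    rw [← (Fin.snocEquiv fun _ => Y).sum_comp, Fintype.sum_prod_type, sum_comm]
    change ∑ z, ∑ a, causalProd q (Fin.snoc z a) = 1
    simp only [causalProd_snoc, ← mul_sum, hq, mul_one]
    exact ih _ fun t => hq t.castSucc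

variable {q r : (t : Fin n) → (Fin t → Y) → Y → ℝ}

theorem causalProd_nonneg (hq : ∀ t pre b, 0 ≤ q t pre b) (y : Fin n → Y) :
    0 ≤ causalProd q y :=
  prod_nonneg fun _ _ => hq _ _ _

theorem causalProd_le_pow_mul {c : ℝ} (hq : ∀ t pre b, 0 ≤ q t pre b)
    (hqr : ∀ t pre b, q t pre b ≤ c * r t pre b) (y : Fin n → Y) :
    causalProd q y ≤ c ^ n * causalProd r y :=
  calc causalProd q y ≤ ∏ t : Fin n, c * r t _ (y t) :=
        prod_le_prod (fun _ _ => hq _ _ _) fun _ _ => hqr _ _ _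
    _ = c ^ n * causalProd r y := by
        rw [prod_mul_distrib, prod_const, card_univ, Fintype.card_fin, causalProd]

theorem causalProd_eq_zero_of_causalProd_eq_zero
    (hrq : ∀ t pre b, r t pre b = 0 → q t pre b = 0) {y : Fin n → Y}
    (hr : causalProd r y = 0) : causalProd q y = 0 :=
  have ⟨t, _, ht⟩ := prod_eq_zero_iff.1 hr
  prod_eq_zero (mem_univ t) (hrq _ _ _ ht)

end causalProd

section supportCond

variable {X Y : Type*} [Fintype Y] (W : X → Y → ℝ)

noncomputable def supportMass (x x' : X) : ℝ :=
  ∑ y, if 0 < W x' y then W x y else 0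

/-- `W x` conditioned on the support of `W x'`; it is the paper's auxiliary kernel `Q` with
`x = f_t(m₁, y^{t-1})` and `x' = f_t(m₂, y^{t-1})`. -/
noncomputable def supportCond (x x' : X) (y : Y) : ℝ :=
  (if 0 < W x' y then W x y else 0) / supportMass W x x'

variable {W}

theorem sum_supportCond {x x' : X} (h : 0 < supportMass W x x') :
    ∑ y, supportCond W x x' y = 1 := by
  simp only [supportCond, ← sum_div]
  exact div_self h.ne'

theorem supportCond_nonneg (hW : ∀ x y, 0 ≤ W x y) (x x' : X) (y : Y) :
    0 ≤ supportCond W x x' y :=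
  have ite_nonneg (y : Y) : 0 ≤ if 0 < W x' y then W x y else 0 := by split_ifs <;> simp [hW]
  div_nonneg (ite_nonneg y) (sum_nonneg fun y _ => ite_nonneg y)

theorem supportCond_eq_zero_of_eq_zero {x x' : X} {y : Y} (h : W x' y = 0) :
    supportCond W x x' y = 0 := by
  simp [supportCond, h]

theorem supportCond_le_exp_mul (hW : ∀ x y, 0 ≤ W x y) {x x' : X} {T : ℝ}
    (hT : exp (-T) ≤ supportMass W x x') (y : Y) :
    supportCond W x x' y ≤ exp T * W x y := by
  have hpos : 0 < supportMass W x x' := (exp_pos _).trans_le hT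
  rw [supportCond, div_le_iff₀ hpos]
  calc (if 0 < W x' y then W x y else 0) ≤ W x y := by split_ifs <;> simp [hW]
    _ = exp T * exp (-T) * W x y := by rw [← exp_add, add_neg_cancel, exp_zero, one_mul]
    _ ≤ exp T * W x y * supportMass W x x' := by
        rw [mul_right_comm]
        exact mul_le_mul_of_nonneg_left hT (mul_nonneg (exp_nonneg T) (hW x y))

end supportCond

theorem Real.exp_neg_iSup_neg_log_le {ι : Type*} [Finite ι] {f : ι → ℝ} {i : ι}
    (hf : 0 < f i) :
    exp (-⨆ j, -log (f j)) ≤ f i := by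
  have : -log (f i) ≤ ⨆ j, -log (f j) :=
    le_ciSup (f := fun j => -log (f j)) (Set.finite_range _).bddAbove i
  calc exp (-⨆ j, -log (f j)) ≤ exp (log (f i)) := exp_le_exp.2 (by linarith)
    _ = f i := exp_log hf

theorem one_le_mul_sum_ite_of_le {α : Type*} [Fintype α] {p : α → Prop} [DecidablePred p]
    {P Q : α → ℝ} {c : ℝ} (hQ : ∑ y, Q y = 1) (hQP : ∀ y, Q y ≤ c * P y)
    (hQp : ∀ y, ¬ p y → Q y = 0) :
    1 ≤ c * ∑ y, if p y then P y else 0 := by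
  rw [← hQ, mul_sum]
  refine sum_le_sum fun y _ => ?_
  by_cases hy : p y
  · simpa [hy] using hQP y
  · simp [hy, hQp y hy]

theorem two_message_zero_error_converse_general {X Y : Type} [Fintype X] [Fintype Y]
    (W : X → Y → ℝ) (hW0 : ∀ x y, 0 ≤ W x y)
    (hC0 : ∀ x x' : X, 0 < ∑ y, if 0 < W x' y then W x y else 0)
    (n : ℕ) (enc : Bool → (t : Fin n) → (Fin t.1 → Y) → X)
    (Dec : (Fin n → Y) → Bool)
    (T0 : ℝ)
    (hT0 : T0 = ⨆ p : X × X, -Real.log (∑ y, if 0 < W p.2 y then W p.1 y else 0))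
    (P : Bool → (Fin n → Y) → ℝ)
    (hP : ∀ m y, P m y = ∏ t, W (enc m t fun i => y ⟨i.1, lt_trans i.2 t.2⟩) (y t))
    (herrfree : ∑ y : Fin n → Y, (if Dec y = false then P true y else 0) = 0) :
    Real.exp (-(n * T0)) ≤ ∑ y : Fin n → Y, if Dec y = true then P false y else 0 := by
  have hP : ∀ m, P m = causalProd fun t pre => W (enc m t pre) := fun m => funext (hP m)
  have hmass (x x' : X) : exp (-T0) ≤ supportMass W x x' := by
    rw [hT0]
    exact exp_neg_iSup_neg_log_le (f := fun p : X × X => supportMass W p.1 p.2) (i := (x, x'))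
      (hC0 x x')
  have hP_true : ∀ y, Dec y ≠ true → P true y = 0 := by
    intro y hy
    have := (sum_eq_zero_iff_of_nonneg fun y _ => ?_).1 herrfree y (mem_univ y)
    · simpa [hy] using this
    · split_ifs <;> simp [hP, causalProd_nonneg (fun _ _ _ => hW0 _ _)]
  let q t pre := supportCond W (enc false t pre) (enc true t pre)
  have hq0 t pre b : 0 ≤ q t pre b := supportCond_nonneg hW0 _ _ _
  have key : 1 ≤ exp (n * T0) * ∑ y, if Dec y = true then P false y else 0 := by
    refine one_le_mul_sum_ite_of_le (Q := causalProd q)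
      (sum_causalProd q fun t pre => sum_supportCond (hC0 _ _)) (fun y => ?_) fun y hy => ?_
    · rw [exp_nat_mul, hP]
      exact causalProd_le_pow_mul hq0 (fun _ _ _ => supportCond_le_exp_mul hW0 (hmass _ _) _) y
    · refine causalProd_eq_zero_of_causalProd_eq_zero (fun _ _ _ => supportCond_eq_zero_of_eq_zero)
        ?_
      rw [← hP]
      exact hP_true y hy
  rwa [exp_neg, inv_le_iff_one_le_mul₀' (exp_pos _)]

/-- two-message converse with zero error for one message. For any
feedback encoding scheme of length `n` with two messages and an erasure-free
decoder given by a partition of `Y^n` (`Dec y = false` decodes `m₁`, `Dec y = true`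
decodes `m₂`), if message `m₂` has zero error probability then message `m₁` has
error probability at least `exp(−n T₀)` with
`T₀ = max_{x,x̃}[−log ∑_{y : W(y|x̃)>0} W(y|x)]` (assumed finite: all these sums
are positive, i.e. the zero-error capacity is zero). -/
theorem two_message_zero_error_converse {X Y : Type} [Fintype X] [Fintype Y]
    [Nonempty X]
    (W : X → Y → ℝ) (hW0 : ∀ x y, 0 ≤ W x y) (hW1 : ∀ x, ∑ y, W x y = 1)
    (hC0 : ∀ x x' : X, 0 < ∑ y, if 0 < W x' y then W x y else 0)
    (n : ℕ) (enc : Bool → (t : Fin n) → (Fin t.1 → Y) → X)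
    (Dec : (Fin n → Y) → Bool)
    (T0 : ℝ)
    (hT0 : T0 = ⨆ p : X × X, -Real.log (∑ y, if 0 < W p.2 y then W p.1 y else 0))
    (P : Bool → (Fin n → Y) → ℝ)
    (hP : ∀ m y, P m y = ∏ t, W (enc m t fun i => y ⟨i.1, lt_trans i.2 t.2⟩) (y t))
    (herrfree : ∑ y : Fin n → Y, (if Dec y = false then P true y else 0) = 0) :
    Real.exp (-(n * T0)) ≤ ∑ y : Fin n → Y, if Dec y = true then P false y else 0 :=
  two_message_zero_error_converse_general W hW0 hC0 n enc Dec T0 hT0 P hP herrfree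
end
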